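/- arXiv:2106.06602 — 2 statements merged into one kernel-verified Lean document; each statement's English description precedes it below -/
import Mathlib

section
/- Let S and S₀ be survival functions of discrete distributions supported on 0 < t₁ < ... < t_m with S(0) = S₀(0) = 1 and S(t_j) > 0 for all j ≤ k, and let Λ, Λ₀ be their cumulative hazards (with increments Λ(Δt_j) = (S(t_{j-1}) − S(t_j))/S(t_{j-1}) and analogously for Λ₀). Then S(t_k) − S₀(t_k) = −S(t_k) · ∑_{j=1}^{k} (S₀(t_{j-1})/S(t_j)) · (Λ(Δt_j) − Λ₀(Δt_j)). -/
/- Discrete Duhamel equation: `S j` and `S₀ j` denote two survival functions at grid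
point `t_j` (with value 1 at time 0), with hazard increments
`Λ(Δt_j) = (S (j-1) - S j)/S (j-1)` and analogously for `S₀`.  Then
`S k - S₀ k = -S k · ∑_{j=1}^k (S₀ (j-1)/S j)(Λ(Δt_j) - Λ₀(Δt_j))`. -/
theorem stmt_13 (S S₀ : ℕ → ℝ) (hS0 : S 0 = 1) (hS₀0 : S₀ 0 = 1)
    (hmono : ∀ j, S (j + 1) ≤ S j) (hmono₀ : ∀ j, S₀ (j + 1) ≤ S₀ j)
    (hbd : ∀ j, 0 ≤ S j ∧ S j ≤ 1) (hbd₀ : ∀ j, 0 ≤ S₀ j ∧ S₀ j ≤ 1)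
    (k : ℕ) (hpos : ∀ j ≤ k, 0 < S j) (hpos₀ : ∀ j ≤ k, 0 < S₀ j) :
    S k - S₀ k =
      -S k * ∑ j ∈ Finset.range k,
        (S₀ j / S (j + 1)) *
          ((S j - S (j + 1)) / S j - (S₀ j - S₀ (j + 1)) / S₀ j) := by
  have key : ∑ j ∈ Finset.range k,
      (S₀ j / S (j + 1)) *
        ((S j - S (j + 1)) / S j - (S₀ j - S₀ (j + 1)) / S₀ j)
      = ∑ j ∈ Finset.range k, (S₀ (j + 1) / S (j + 1) - S₀ j / S j) := by
    apply Finset.sum_congr rfl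
    intro j hj
    rw [Finset.mem_range] at hj
    have h1 : S j ≠ 0 := (hpos j hj.le).ne'
    have h2 : S (j + 1) ≠ 0 := (hpos (j + 1) hj).ne'
    have h3 : S₀ j ≠ 0 := (hpos₀ j hj.le).ne'
    field_simp
    ring
  rw [key, Finset.sum_range_sub (fun j => S₀ j / S j), hS0, hS₀0]
  have hk : S k ≠ 0 := (hpos k le_rfl).ne'
  field_simp
  ring
end

section
/- Suppose T and C are conditionally independent given (A, W), T has conditional survival function S₀(t|a,w) := P(T > t | A=a, W=w) with S₀(t|a,w) > 0, and C has left-continuous conditional survival function G₀(t|a,w) := P(C ≥ t | A=a, W=w), and let Y = min(T,C), Δ = 1{T ≤ C}. In the discrete-time setting where T is supported on a finite grid, E[Δ·1{Y ≤ t}/G₀(Y|A,W) | A=a, W=w] = 1 − S₀(t|a,w) = P(T ≤ t | A=a, W=w). -/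
open MeasureTheory ProbabilityTheory
open scoped Classical

/-! Since `T` lives on a finite grid, the weighted indicator splits into the events
`{T = x, C ≥ x}` for grid points `x ≤ t`. By conditional independence each has probability
`P(T = x) · G₀ x`, so the weight `1 / G₀ x` cancels the censoring factor and the sum collapses
to `P(T ≤ t) = 1 - S₀ t`. -/

section

variable {Ω : Type*} {T C : Ω → ℝ}

lemma ite_le_and_min_le_eq_sum_indicator {grid : Finset ℝ} (hgrid : ∀ ω, T ω ∈ grid)
    (f : ℝ → ℝ) (t : ℝ) (ω : Ω) :
    (if T ω ≤ C ω ∧ min (T ω) (C ω) ≤ t then f (min (T ω) (C ω)) else 0) =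
      ∑ x ∈ grid.filter (· ≤ t), (T ⁻¹' {x} ∩ C ⁻¹' Set.Ici x).indicator (fun _ ↦ f x) ω := by
  simp only [Set.indicator, Set.mem_inter_iff, Set.mem_preimage, Set.mem_singleton_iff,
    Set.mem_Ici, ite_and, Finset.sum_ite_eq, Finset.mem_filter, hgrid ω, true_and]
  by_cases hTC : T ω ≤ C ω <;> simp [hTC]

variable [MeasurableSpace Ω] {μ : Measure Ω}

lemma integral_ite_le_and_min_le_eq_sum [IsFiniteMeasure μ] (hT : Measurable T)
    (hC : Measurable C) {grid : Finset ℝ} (hgrid : ∀ ω, T ω ∈ grid) (f : ℝ → ℝ) (t : ℝ) :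
    ∫ ω, (if T ω ≤ C ω ∧ min (T ω) (C ω) ≤ t then f (min (T ω) (C ω)) else 0) ∂μ =
      ∑ x ∈ grid.filter (· ≤ t), μ.real (T ⁻¹' {x} ∩ C ⁻¹' Set.Ici x) * f x := by
  have hmeas (x : ℝ) : MeasurableSet (T ⁻¹' {x} ∩ C ⁻¹' Set.Ici x) :=
    (hT (measurableSet_singleton x)).inter (hC measurableSet_Ici)
  simp_rw [ite_le_and_min_le_eq_sum_indicator hgrid]
  rw [integral_finsetSum _ fun x _ ↦ (integrable_const _).indicator (hmeas x)]
  simp only [integral_indicator_const _ (hmeas _), smul_eq_mul]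

lemma sum_measureReal_preimage_singleton_filter_le [IsFiniteMeasure μ] (hT : Measurable T)
    {grid : Finset ℝ} (hgrid : ∀ ω, T ω ∈ grid) (t : ℝ) :
    ∑ x ∈ grid.filter (· ≤ t), μ.real (T ⁻¹' {x}) = μ.real {ω | T ω ≤ t} := by
  rw [sum_measureReal_preimage_singleton _ fun x _ ↦ hT (measurableSet_singleton x)]
  congr 1
  ext ω
  simp [hgrid ω]

lemma measureReal_inter_div_eq_of_mul {A E : Set Ω}
    (hindep : μ.real (A ∩ E) = μ.real A * μ.real E) (hE : A.Nonempty → μ.real E ≠ 0) :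
    μ.real (A ∩ E) / μ.real E = μ.real A := by
  rcases A.eq_empty_or_nonempty with rfl | hA
  · simp
  · rw [hindep, mul_div_assoc, div_self (hE hA), mul_one]

end

theorem stmt_15_general {Ω : Type*} [MeasurableSpace Ω] (P : Measure Ω) [IsProbabilityMeasure P]
    (B : Set Ω)
    (T C : Ω → ℝ) (hT : Measurable T) (hC : Measurable C)
    (hindep : ∀ s u : Set ℝ, MeasurableSet s → MeasurableSet u →
      ProbabilityTheory.cond P B (T ⁻¹' s ∩ C ⁻¹' u) =
        ProbabilityTheory.cond P B (T ⁻¹' s) * ProbabilityTheory.cond P B (C ⁻¹' u))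
    (grid : Finset ℝ) (hgrid : ∀ ω, T ω ∈ grid)
    (S₀ G₀ : ℝ → ℝ)
    (hS₀ : ∀ u, S₀ u = (ProbabilityTheory.cond P B {ω | u < T ω}).toReal)
    (hG₀ : ∀ u, G₀ u = (ProbabilityTheory.cond P B {ω | u ≤ C ω}).toReal)
    (t : ℝ) (hS₀pos : 0 < S₀ t)
    (hG₀pos : ∀ ω, T ω ≤ t → 0 < G₀ (T ω)) :
    (∫ ω, (if T ω ≤ C ω ∧ min (T ω) (C ω) ≤ t
        then 1 / G₀ (min (T ω) (C ω)) else 0) ∂(ProbabilityTheory.cond P B))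
      = 1 - S₀ t ∧
    1 - S₀ t = (ProbabilityTheory.cond P B {ω | T ω ≤ t}).toReal := by
  set μ := P[|B]
  have hPB : P B ≠ 0 := fun h ↦ by simp [hS₀, μ, cond_eq_zero_of_meas_eq_zero h] at hS₀pos
  have : IsProbabilityMeasure μ := cond_isProbabilityMeasure hPB
  have hcdf : μ.real {ω | T ω ≤ t} = 1 - S₀ t := by
    rw [hS₀, ← measureReal_def,
      ← probReal_compl_eq_one_sub (measurableSet_lt measurable_const hT)]
    simp [Set.compl_def]
  have hterm (x : ℝ) (hx : x ∈ grid.filter (· ≤ t)) :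
      μ.real (T ⁻¹' {x} ∩ C ⁻¹' Set.Ici x) * (1 / G₀ x) = μ.real (T ⁻¹' {x}) := by
    rw [mul_one_div, hG₀, ← measureReal_def]
    refine measureReal_inter_div_eq_of_mul ?_ fun ⟨ω, hω⟩ ↦ ?_
    · simp only [measureReal_def, hindep _ _ (measurableSet_singleton x) measurableSet_Ici,
        ENNReal.toReal_mul]
    · have hTω : T ω = x := hω
      have := hG₀pos ω (hTω ▸ (Finset.mem_filter.1 hx).2)
      rw [hTω, hG₀] at this
      exact this.ne'
  refine ⟨?_, hcdf.symm⟩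
  rw [integral_ite_le_and_min_le_eq_sum hT hC hgrid (fun y ↦ 1 / G₀ y),
    Finset.sum_congr rfl hterm, sum_measureReal_preimage_singleton_filter_le hT hgrid, hcdf]

theorem stmt_15 {Ω : Type*} [MeasurableSpace Ω] (P : Measure Ω) [IsProbabilityMeasure P]
    (B : Set Ω) (hB : MeasurableSet B)
    (T C : Ω → ℝ) (hT : Measurable T) (hC : Measurable C)
    (hindep : ∀ s u : Set ℝ, MeasurableSet s → MeasurableSet u →
      ProbabilityTheory.cond P B (T ⁻¹' s ∩ C ⁻¹' u) =
        ProbabilityTheory.cond P B (T ⁻¹' s) * ProbabilityTheory.cond P B (C ⁻¹' u))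
    (grid : Finset ℝ) (hgrid : ∀ ω, T ω ∈ grid)
    (S₀ G₀ : ℝ → ℝ)
    (hS₀ : ∀ u, S₀ u = (ProbabilityTheory.cond P B {ω | u < T ω}).toReal)
    (hG₀ : ∀ u, G₀ u = (ProbabilityTheory.cond P B {ω | u ≤ C ω}).toReal)
    (t : ℝ) (hS₀pos : 0 < S₀ t)
    (hG₀pos : ∀ ω, T ω ≤ t → 0 < G₀ (T ω)) :
    (∫ ω, (if T ω ≤ C ω ∧ min (T ω) (C ω) ≤ t
        then 1 / G₀ (min (T ω) (C ω)) else 0) ∂(ProbabilityTheory.cond P B))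
      = 1 - S₀ t ∧
    1 - S₀ t = (ProbabilityTheory.cond P B {ω | T ω ≤ t}).toReal :=
  stmt_15_general P B T C hT hC hindep grid hgrid S₀ G₀ hS₀ hG₀ t hS₀pos hG₀pos
end
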